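/- Let d2, a2, q > 0, x2 > 0, and 0 < h1 < h2. Suppose w1 is a solution of the downstream toxicant boundary value problem on [0, x2] with toxicant input rate h1 and w2 is a solution with toxicant input rate h2 (all other parameters d2, a2, q equal). Then w1(x) < w2(x) for every x ∈ (0, x2). (The solution of the downstream problem is strictly increasing with respect to h.) -/

import Mathlib

/-- `w` is a solution of the downstream toxicant boundary value problem with
parameters `d2, a2, h, q` on the interval `[0, x2]`. -/
def IsDownstreamSolution (d2 a2 h q x2 : ℝ) (w : ℝ → ℝ) : Prop :=
  ContDiff ℝ 2 w ∧
  (∀ x ∈ Set.Icc (0 : ℝ) x2,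
      d2 * deriv (deriv w) x - a2 * deriv w x + h - q * w x = 0) ∧
  d2 * deriv w 0 - a2 * w 0 = 0 ∧ d2 * deriv w x2 - a2 * w x2 = 0

/-- If `f` has zero derivative and strictly negative second derivative at a point of
`[A, B]`, then it is not a minimum point of `f` on `[A, B]`. -/
private lemma no_min {f : ℝ → ℝ} {x0 A B L : ℝ}
    (hf1 : Differentiable ℝ f) (hAB : A < B) (hx0 : x0 ∈ Set.Icc A B)
    (h1 : deriv f x0 = 0)
    (h2 : HasDerivAt (deriv f) L x0) (hL : L < 0) :
    ¬ IsMinOn f (Set.Icc A B) x0 := by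
  intro hmin
  have hslope : Filter.Tendsto (slope (deriv f) x0) (nhdsWithin x0 {x0}ᶜ) (nhds L) :=
    hasDerivAt_iff_tendsto_slope.mp h2
  have hev : ∀ᶠ x in nhdsWithin x0 {x0}ᶜ, slope (deriv f) x0 x < 0 :=
    hslope.eventually_lt_const hL
  rw [eventually_nhdsWithin_iff, Metric.eventually_nhds_iff] at hev
  obtain ⟨δ, hδ, hδ'⟩ := hev
  have hslope' : ∀ x, x ≠ x0 → |x - x0| < δ → deriv f x / (x - x0) < 0 := by
    intro x hx hxd
    have := hδ' (show dist x x0 < δ by rwa [Real.dist_eq]) (by simpa using hx)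
    rwa [slope_def_field, h1, sub_zero] at this
  rcases lt_or_eq_of_le hx0.2 with hB | hB
  · -- x0 < B : go right
    set b := min (x0 + δ / 2) B with hb
    have hx0b : x0 < b := lt_min (by linarith) hB
    have hbB : b ≤ B := min_le_right _ _
    have hneg : ∀ x ∈ Set.Ioo x0 b, deriv f x < 0 := by
      intro x hx
      have hxd : |x - x0| < δ := by
        rw [abs_lt]
        have : x < x0 + δ / 2 := lt_of_lt_of_le hx.2 (min_le_left _ _)
        constructor <;> linarith [hx.1]
      have := hslope' x (ne_of_gt hx.1) hxd
      have hpos : 0 < x - x0 := by linarith [hx.1]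
      rcases div_neg_iff.mp this with ⟨_, h'⟩ | ⟨h', _⟩
      · linarith
      · exact h'
    have hanti : StrictAntiOn f (Set.Icc x0 b) := by
      apply strictAntiOn_of_deriv_neg (convex_Icc _ _) hf1.continuous.continuousOn
      intro x hx
      rw [interior_Icc] at hx
      exact hneg x hx
    have hlt : f b < f x0 := hanti (Set.left_mem_Icc.mpr hx0b.le)
      (Set.right_mem_Icc.mpr hx0b.le) hx0b
    have : f x0 ≤ f b := hmin ⟨le_trans hx0.1 hx0b.le, hbB⟩
    linarith
  · -- x0 = B : go left
    have hAx0 : A < x0 := hB ▸ hAB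
    set a := max (x0 - δ / 2) A with ha
    have hax0 : a < x0 := max_lt (by linarith) hAx0
    have haA : A ≤ a := le_max_right _ _
    have hposd : ∀ x ∈ Set.Ioo a x0, 0 < deriv f x := by
      intro x hx
      have hxd : |x - x0| < δ := by
        rw [abs_lt]
        have : x0 - δ / 2 < x := lt_of_le_of_lt (le_max_left _ _) hx.1
        constructor <;> linarith [hx.2]
      have := hslope' x (ne_of_lt hx.2) hxd
      have hneg' : x - x0 < 0 := by linarith [hx.2]
      rcases div_neg_iff.mp this with ⟨h', _⟩ | ⟨_, h'⟩
      · exact h'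
      · linarith
    have hmono : StrictMonoOn f (Set.Icc a x0) := by
      apply strictMonoOn_of_deriv_pos (convex_Icc _ _) hf1.continuous.continuousOn
      intro x hx
      rw [interior_Icc] at hx
      exact hposd x hx
    have hlt : f a < f x0 := hmono (Set.left_mem_Icc.mpr hax0.le)
      (Set.right_mem_Icc.mpr hax0.le) hax0
    have : f x0 ≤ f a := hmin ⟨haA, le_trans hax0.le hx0.2⟩
    linarith

/-- the solution of the downstream problem is strictly
increasing with respect to the toxicant input rate `h`. -/
theorem downstream_mono_in_h
    (d2 a2 q x2 h1 h2 : ℝ) (w1 w2 : ℝ → ℝ)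
    (hd2 : 0 < d2) (ha2 : 0 < a2) (hq : 0 < q) (hx2 : 0 < x2)
    (hh1 : 0 < h1) (hh12 : h1 < h2)
    (hw1 : IsDownstreamSolution d2 a2 h1 q x2 w1)
    (hw2 : IsDownstreamSolution d2 a2 h2 q x2 w2) :
    ∀ x ∈ Set.Ioo (0 : ℝ) x2, w1 x < w2 x := by
  obtain ⟨hw1c, hode1, hb10, hb1x⟩ := hw1
  obtain ⟨hw2c, hode2, hb20, hb2x⟩ := hw2
  have hd2' : d2 ≠ 0 := ne_of_gt hd2
  set lam : ℝ := a2 / d2 with hlam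
  have hlamd : d2 * lam = a2 := by rw [hlam]; field_simp
  set u : ℝ → ℝ := fun y => w2 y - w1 y with hu
  have huc : ContDiff ℝ 2 u := hw2c.sub hw1c
  have hud : Differentiable ℝ u := huc.differentiable (by norm_num)
  have hud' : Differentiable ℝ (deriv u) := by
    rw [show (2 : WithTop ℕ∞) = 1 + 1 from rfl] at huc
    exact (contDiff_succ_iff_deriv.mp huc).2.2.differentiable one_ne_zero
  have hw1d : Differentiable ℝ w1 := hw1c.differentiable (by norm_num)
  have hw2d : Differentiable ℝ w2 := hw2c.differentiable (by norm_num)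
  have hderu : ∀ y, deriv u y = deriv w2 y - deriv w1 y := fun y =>
    deriv_sub (hw2d y) (hw1d y)
  have hw1d' : Differentiable ℝ (deriv w1) := by
    rw [show (2 : WithTop ℕ∞) = 1 + 1 from rfl] at hw1c
    exact (contDiff_succ_iff_deriv.mp hw1c).2.2.differentiable one_ne_zero
  have hw2d' : Differentiable ℝ (deriv w2) := by
    rw [show (2 : WithTop ℕ∞) = 1 + 1 from rfl] at hw2c
    exact (contDiff_succ_iff_deriv.mp hw2c).2.2.differentiable one_ne_zero
  have hderu2 : ∀ y, deriv (deriv u) y = deriv (deriv w2) y - deriv (deriv w1) y := by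
    intro y
    have : deriv u = fun y => deriv w2 y - deriv w1 y := funext hderu
    rw [this]
    exact deriv_sub (hw2d' y) (hw1d' y)
  set v : ℝ → ℝ := fun y => Real.exp (-lam * y) * u y with hv
  have hvc : ContDiff ℝ 2 v :=
    (Real.contDiff_exp.comp (contDiff_const.mul contDiff_id)).mul huc
  have hE : ∀ y : ℝ, HasDerivAt (fun t => Real.exp (-lam * t)) (-lam * Real.exp (-lam * y)) y := by
    intro y
    have h0 : HasDerivAt (fun t : ℝ => -lam * t) (-lam) y := by
      simpa using (hasDerivAt_id y).const_mul (-lam)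
    simpa [mul_comm] using h0.exp
  have hV1 : ∀ y, HasDerivAt v (Real.exp (-lam * y) * (deriv u y - lam * u y)) y := by
    intro y
    have := (hE y).fun_mul ((hud y).hasDerivAt)
    exact this.congr_deriv (by ring)
  have hdv : deriv v = fun y => Real.exp (-lam * y) * (deriv u y - lam * u y) :=
    funext fun y => (hV1 y).deriv
  have hV2 : ∀ y, HasDerivAt (deriv v)
      (Real.exp (-lam * y) * (deriv (deriv u) y - 2 * lam * deriv u y + lam ^ 2 * u y)) y := by
    intro y
    rw [hdv]
    have hin : HasDerivAt (fun t => deriv u t - lam * u t)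
        (deriv (deriv u) y - lam * deriv u y) y :=
      ((hud' y).hasDerivAt).sub (((hud y).hasDerivAt).const_mul lam)
    have := (hE y).fun_mul hin
    exact this.congr_deriv (by ring)
  have hdv2 : ∀ y, deriv (deriv v) y
      = Real.exp (-lam * y) * (deriv (deriv u) y - 2 * lam * deriv u y + lam ^ 2 * u y) :=
    fun y => (hV2 y).deriv
  -- the ODE satisfied by v
  have hodev : ∀ x ∈ Set.Icc (0:ℝ) x2,
      d2 * deriv (deriv v) x = q * v x - a2 * deriv v x - (h2 - h1) * Real.exp (-lam * x) := by
    intro x hx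
    have key : d2 * deriv (deriv u) x - a2 * deriv u x - q * u x + (h2 - h1) = 0 := by
      rw [hderu2 x, hderu x]
      simp only [hu]
      linarith [hode1 x hx, hode2 x hx]
    rw [hdv2 x]
    simp only [hdv]; simp only [hv]
    set E := Real.exp (-lam * x)
    linear_combination E * key + E * (lam * u x - 2 * deriv u x) * hlamd
  -- Neumann boundary conditions for v
  have hbv0 : deriv v 0 = 0 := by
    rw [hdv]
    simp only [hderu 0]; simp only [hu]
    have : d2 * (deriv w2 0 - deriv w1 0) - a2 * (w2 0 - w1 0) = 0 := by linarith
    have hz : deriv w2 0 - deriv w1 0 - lam * (w2 0 - w1 0) = 0 := by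
      rw [hlam]; field_simp; linarith
    rw [hz, mul_zero]
  have hbvx : deriv v x2 = 0 := by
    rw [hdv]
    simp only [hderu x2]; simp only [hu]
    have : d2 * (deriv w2 x2 - deriv w1 x2) - a2 * (w2 x2 - w1 x2) = 0 := by linarith
    have hz : deriv w2 x2 - deriv w1 x2 - lam * (w2 x2 - w1 x2) = 0 := by
      rw [hlam]; field_simp; linarith
    rw [hz, mul_zero]
  -- minimum of v on [0, x2]
  obtain ⟨x0, hx0, hmin⟩ := isCompact_Icc.exists_isMinOn (Set.nonempty_Icc.mpr hx2.le)
    hvc.continuous.continuousOn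
  have hvd : Differentiable ℝ v := hvc.differentiable (by norm_num)
  have hvpos : 0 < v x0 := by
    by_contra hm
    push_neg at hm
    have hdv0 : deriv v x0 = 0 := by
      rcases eq_or_lt_of_le hx0.1 with h0 | h0
      · rw [← h0]; exact hbv0
      rcases eq_or_lt_of_le hx0.2 with hB | hB
      · rw [hB]; exact hbvx
      · exact (hmin.isLocalMin (Icc_mem_nhds h0 hB)).deriv_eq_zero
    have hode0 := hodev x0 hx0
    rw [hdv0] at hode0
    have hEpos : 0 < Real.exp (-lam * x0) := Real.exp_pos _
    have hL : Real.exp (-lam * x0) * (deriv (deriv u) x0 - 2 * lam * deriv u x0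
        + lam ^ 2 * u x0) < 0 := by
      rw [← hdv2 x0]
      nlinarith [hode0, mul_nonpos_of_nonneg_of_nonpos hq.le hm]
    exact no_min hvd hx2 hx0 hdv0 (hV2 x0) hL hmin
  intro x hx
  have hvx : 0 < v x := lt_of_lt_of_le hvpos (hmin (Set.Ioo_subset_Icc_self hx))
  have hEpos : 0 < Real.exp (-lam * x) := Real.exp_pos _
  have : 0 < w2 x - w1 x := by
    have hvx' : 0 < Real.exp (-lam * x) * (w2 x - w1 x) := hvx
    nlinarith [hvx', hEpos]
  linarith
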